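/- Let h > 1, let n ≡ Σ_{i=0}^{h−1} n_i 3^i + 1 (mod 3^h) with n_0 ∈ {0,1,2} and n_1 = ... = n_{h−1} = 2, and let e = Σ_{i=0}^{h−1} e_i 3^i with e_0 = 1 and e_i ∈ {0,2} for 1 ≤ i ≤ h−1. Then p(n,e) ≡ 2 (mod 3). -/

import Mathlib

/-!
Modulo 3 the Lee ball size factors over ternary digits exactly like a binomial coefficient under
Lucas' theorem, since `2 ^ 3 ≡ 2`: `k(n, e) ≡ k(n / 3, e / 3) * k(n % 3, e % 3)`.
Reversing the sum defining `p`, the weight `2 (e - m)²` of `k(n - 1, m)` only depends on `m % 3`,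
and for `e = 3f + 1` the sum collapses to `2 k(N, f) + c Σ_{q < f} k(N, q)`, `N = (n - 1) / 3`.
The hypotheses say that the last ternary digits of `N` are all `2` (i.e. `3 ^ k ∣ N + 1`, with
`f < 3 ^ k`) and that the digits of `f` are `0` or `2`. As `k(2, 0) ≡ k(2, 2) ≡ 1`,
`k(2, 0) + k(2, 1) + k(2, 2) ≡ 1` and `k(2, 0) + k(2, 1) ≡ 0`, recursion on the digits of `f`
gives `k(N, f) ≡ 1` and `Σ_{q < f} k(N, q) ≡ 0`.
-/

/-- The cardinality of the `n`-dimensional Lee ball of radius `e`. -/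
def leeK (n e : ℕ) : ℕ := ∑ i ∈ Finset.range (min n e + 1), 2 ^ i * n.choose i * e.choose i

/-- `p(n,e) = Σ_{i=0}^{e} 2 i² k(n−1, e−i)`. -/
def leeP (n e : ℕ) : ℕ := ∑ i ∈ Finset.range (e + 1), 2 * i ^ 2 * leeK (n - 1) (e - i)

open Finset

lemma sum_range_mul_eq_sum_sum_range {M : Type*} [AddCommMonoid M] (k m : ℕ) (g : ℕ → M) :
    ∑ i ∈ range (k * m), g i = ∑ q ∈ range m, ∑ r ∈ range k, g (k * q + r) := by
  induction m with
  | zero => simp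
  | succ m ih => rw [Nat.mul_succ, sum_range_add, ih, sum_range_succ]

lemma sum_range_succ_mul_pow {R : Type*} [CommSemiring R] (b : R) (c : ℕ → R) (k : ℕ) :
    ∑ i ∈ range (k + 1), c i * b ^ i = c 0 + b * ∑ i ∈ range k, c (i + 1) * b ^ i := by
  rw [sum_range_succ', mul_sum, add_comm]
  simp only [pow_succ, pow_zero, mul_one]
  congr 1
  exact sum_congr rfl fun i _ => by ring

lemma leeK_eq_sum_range {n e m : ℕ} (hm : e < m) :
    leeK n e = ∑ i ∈ range m, 2 ^ i * n.choose i * e.choose i := by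
  refine sum_subset (range_subset_range.2 (by omega)) fun i _ hi => ?_
  rw [mem_range, not_lt, Nat.add_one_le_iff, min_lt_iff] at hi
  rcases hi with hi | hi <;> simp [Nat.choose_eq_zero_of_lt hi]

lemma leeK_zero_right (n : ℕ) : leeK n 0 = 1 := by simp [leeK]

lemma leeK_lucas_zmod_three (n e : ℕ) :
    (leeK n e : ZMod 3) = leeK (n / 3) (e / 3) * leeK (n % 3) (e % 3) := by
  rw [leeK_eq_sum_range (m := 3 * (e / 3 + 1)) (by omega), leeK_eq_sum_range (lt_add_one (e / 3)),
    leeK_eq_sum_range (Nat.mod_lt e three_pos)]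
  push_cast
  rw [sum_range_mul_eq_sum_sum_range, sum_mul_sum]
  refine sum_congr rfl fun q _ => sum_congr rfl fun r hrange => ?_
  have hr : r < 3 := mem_range.1 hrange
  have hchoose (a : ℕ) :
      (a.choose (3 * q + r) : ZMod 3) = ((a % 3).choose r * (a / 3).choose q : ℕ) := by
    have lucas :=
      Choose.choose_modEq_choose_mod_mul_choose_div_nat (n := a) (k := 3 * q + r) (p := 3)
    rw [show (3 * q + r) % 3 = r by omega, show (3 * q + r) / 3 = q by omega] at lucas
    exact (ZMod.natCast_eq_natCast_iff _ _ _).2 lucas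
  have hpow : (2 : ZMod 3) ^ (3 * q + r) = 2 ^ q * 2 ^ r := by
    rw [pow_add, pow_mul, show (2 : ZMod 3) ^ 3 = 2 from rfl]
  rw [hchoose, hchoose, hpow]
  push_cast
  ring

lemma leeK_lucas_three_mul_add (M q : ℕ) {r : ℕ} (hr : r < 3) :
    (leeK M (3 * q + r) : ZMod 3) = leeK (M / 3) q * leeK (M % 3) r := by
  rw [leeK_lucas_zmod_three, show (3 * q + r) / 3 = q by omega, show (3 * q + r) % 3 = r by omega]

lemma mod_three_eq_two_of_pow_succ_dvd {M k : ℕ} (h : 3 ^ (k + 1) ∣ M + 1) : M % 3 = 2 := by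
  have h3 : 3 ∣ M + 1 := (dvd_pow_self 3 k.succ_ne_zero).trans h
  omega

lemma pow_dvd_div_three_add_one {M k : ℕ} (h : 3 ^ (k + 1) ∣ M + 1) : 3 ^ k ∣ M / 3 + 1 := by
  have h3 : 3 ∣ M + 1 := (dvd_pow_self 3 k.succ_ne_zero).trans h
  rw [show M + 1 = 3 * (M / 3 + 1) by omega, pow_succ'] at h
  exact Nat.dvd_of_mul_dvd_mul_left three_pos h

lemma leeK_sum_digits_cast_eq_one (k : ℕ) {c : ℕ → ℕ} {M : ℕ} (hc : ∀ i < k, c i = 0 ∨ c i = 2)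
    (hM : 3 ^ k ∣ M + 1) : (leeK M (∑ i ∈ range k, c i * 3 ^ i) : ZMod 3) = 1 := by
  induction k generalizing c M with
  | zero => simp [leeK_zero_right]
  | succ k ih =>
    have hM3 := mod_three_eq_two_of_pow_succ_dvd hM
    have hc0 : c 0 < 3 := by rcases hc 0 k.succ_pos with h | h <;> omega
    rw [sum_range_succ_mul_pow, add_comm, leeK_lucas_three_mul_add M _ hc0,
      ih (fun i hi => hc (i + 1) (by omega)) (pow_dvd_div_three_add_one hM), hM3, one_mul]
    rcases hc 0 k.succ_pos with h | h <;> rw [h] <;> decide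

lemma sum_leeK_lt_sum_digits_cast_eq_zero (k : ℕ) {c : ℕ → ℕ} {M : ℕ}
    (hc : ∀ i < k, c i = 0 ∨ c i = 2) (hM : 3 ^ k ∣ M + 1) :
    ∑ m ∈ range (∑ i ∈ range k, c i * 3 ^ i), (leeK M m : ZMod 3) = 0 := by
  induction k generalizing c M with
  | zero => simp
  | succ k ih =>
    have hM3 := mod_three_eq_two_of_pow_succ_dvd hM
    have hc0 : c 0 < 3 := by rcases hc 0 k.succ_pos with h | h <;> omega
    have hblocks : ∑ m ∈ range (3 * ∑ i ∈ range k, c (i + 1) * 3 ^ i), (leeK M m : ZMod 3) = 0 := by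
      rw [sum_range_mul_eq_sum_sum_range,
        ← ih (fun i hi => hc (i + 1) (by omega)) (pow_dvd_div_three_add_one hM)]
      refine sum_congr rfl fun q _ => ?_
      rw [sum_congr rfl fun r hr => leeK_lucas_three_mul_add M q (mem_range.1 hr), ← mul_sum, hM3,
        show ∑ r ∈ range 3, (leeK 2 r : ZMod 3) = 1 by decide, mul_one]
    rw [sum_range_succ_mul_pow, add_comm, sum_range_add, hblocks, zero_add,
      sum_congr rfl fun r hr => leeK_lucas_three_mul_add M _ ((mem_range.1 hr).trans hc0),
      ← mul_sum, hM3]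
    rcases hc 0 k.succ_pos with h | h
    · rw [h, sum_range_zero, mul_zero]
    · rw [h, show ∑ r ∈ range 2, (leeK 2 r : ZMod 3) = 0 by decide, mul_zero]

lemma leeP_cast_eq_sum_of_mod_three_eq_one (N : ℕ) {e : ℕ} (he : e % 3 = 1) :
    (leeP (N + 1) e : ZMod 3) = ∑ m ∈ range (e + 1), 2 * (1 - (m : ZMod 3)) ^ 2 * leeK N m := by
  rw [leeP, Nat.add_sub_cancel, Nat.cast_sum, ← sum_range_reflect]
  refine sum_congr rfl fun m hm => ?_
  have hme : m ≤ e := Nat.lt_succ_iff.1 (mem_range.1 hm)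
  rw [show e + 1 - 1 - m = e - m by omega, Nat.sub_sub_self hme]
  push_cast [Nat.cast_sub hme]
  rw [← ZMod.natCast_mod e 3, he, Nat.cast_one]

lemma leeP_cast_three_mul_add_one (N f : ℕ) :
    (leeP (N + 1) (3 * f + 1) : ZMod 3) =
      2 * leeK (N / 3) f + 2 * (1 + leeK (N % 3) 2) * ∑ q ∈ range f, (leeK (N / 3) q : ZMod 3) := by
  have h3 : (3 : ZMod 3) = 0 := rfl
  rw [leeP_cast_eq_sum_of_mod_three_eq_one N (by omega), show 3 * f + 1 + 1 = 3 * f + 2 by ring,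
    sum_range_add, sum_range_mul_eq_sum_sum_range, mul_sum, add_comm]
  simp only [sum_range_succ, sum_range_zero, zero_add]
  push_cast
  simp only [h3, zero_mul, zero_add, sub_zero, sub_self, show ((1 : ZMod 3) - 2) ^ 2 = 1 by decide,
    leeK_lucas_three_mul_add N _ three_pos,
    leeK_lucas_three_mul_add N _ (by norm_num : 2 < 3), leeK_zero_right]
  simp only [Nat.cast_one, zero_pow two_ne_zero, mul_zero, zero_mul, add_zero]
  exact congrArg₂ _ (by ring) (sum_congr rfl fun q _ => by ring)

lemma pow_dvd_div_three_add_one_of_add_three_modEq {N d k : ℕ} (hd : d < 3)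
    (hN : N + 3 ≡ d [MOD 3 ^ (k + 1)]) : 3 ^ k ∣ N / 3 + 1 := by
  have hdvd : 3 ^ (k + 1) ∣ N + 3 - d := (Nat.modEq_iff_dvd' (by omega)).1 hN.symm
  have hmod : N % 3 = d := by
    have := (Nat.ModEq.of_dvd (dvd_pow_self 3 k.succ_ne_zero) hN)
    unfold Nat.ModEq at this
    omega
  rw [show N + 3 - d = 3 * (N / 3 + 1) by omega, pow_succ'] at hdvd
  exact Nat.dvd_of_mul_dvd_mul_left three_pos hdvd

theorem leeP_eq_two_mod_three (h : ℕ) (hh : 1 < h) (n : ℕ) (hn : 0 < n)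
    (nd : ℕ → ℕ) (hnd0 : nd 0 < 3) (hnd : ∀ i, 1 ≤ i → i ≤ h - 1 → nd i = 2)
    (hncong : n ≡ (∑ i ∈ Finset.range h, nd i * 3 ^ i) + 1 [MOD 3 ^ h])
    (ed : ℕ → ℕ) (hed0 : ed 0 = 1) (hed : ∀ i, 1 ≤ i → i ≤ h - 1 → ed i = 0 ∨ ed i = 2)
    (e : ℕ) (he : e = ∑ i ∈ Finset.range h, ed i * 3 ^ i) :
    leeP n e ≡ 2 [MOD 3] := by
  obtain ⟨k, rfl⟩ : ∃ k, h = k + 1 := ⟨h - 1, by omega⟩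
  obtain ⟨N, rfl⟩ : ∃ N, n = N + 1 := ⟨n - 1, by omega⟩
  have hdigits : ∀ i < k, ed (i + 1) = 0 ∨ ed (i + 1) = 2 :=
    fun i hi => hed (i + 1) (by omega) (by omega)
  have hT : ∑ i ∈ range (k + 1), nd i * 3 ^ i + 3 = nd 0 + 3 ^ (k + 1) := by
    have hgeom : (∑ i ∈ range k, 3 ^ i) * 2 + 1 = 3 ^ k := geom_sum_mul_add 2 k
    rw [sum_range_succ_mul_pow, sum_congr rfl fun i hi => by
      rw [hnd (i + 1) (by omega) (by have := mem_range.1 hi; omega)], ← mul_sum, pow_succ, ← hgeom]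
    ring
  have hM : 3 ^ k ∣ N / 3 + 1 := by
    refine pow_dvd_div_three_add_one_of_add_three_modEq hnd0 ?_
    calc N + 3 ≡ ∑ i ∈ range (k + 1), nd i * 3 ^ i + 3 [MOD 3 ^ (k + 1)] :=
          (Nat.ModEq.add_right_cancel' 1 hncong).add_right 3
      _ = nd 0 + 3 ^ (k + 1) := hT
      _ ≡ nd 0 [MOD 3 ^ (k + 1)] := by simp [Nat.ModEq]
  rw [he, sum_range_succ_mul_pow, hed0, add_comm 1, ← ZMod.natCast_eq_natCast_iff,
    leeP_cast_three_mul_add_one, leeK_sum_digits_cast_eq_one k hdigits hM,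
    sum_leeK_lt_sum_digits_cast_eq_zero k hdigits hM]
  ring
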